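/- arXiv:1907.00747 — 5 statements merged into one kernel-verified Lean document; each statement's English description precedes it below -/
import Mathlib

section
/- Let C be a Krull-Schmidt extriangulated category with enough projectives and injectives. If X ⊆ C is a covariantly finite subcategory closed under extensions and direct summands, then Y = {A ∈ C : E(A, X) = 0 for all X ∈ X} is a contravariantly finite subcategory closed under extensions and direct summands. -/
open CategoryTheory Opposite Limits

universe v u

namespace ExtTilting

variable (C : Type u) [Category.{v} C] [Preadditive C] [HasFiniteBiproducts C] [HasBinaryBiproducts C]

/-- A Krull-Schmidt category: every object is a finite biproduct of objects
with local endomorphism rings. -/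
def IsKrullSchmidt : Prop :=
  ∀ X : C, ∃ (n : ℕ) (f : Fin n → C),
    (∀ i, IsLocalRing (End (f i))) ∧ Nonempty (X ≅ ⨁ f)

/-- An extriangulated category structure (Nakaoka–Palu) on an additive category `C`:
a biadditive functor `E : Cᵒᵖ × C ⥤ Ab` together with a realization of each
`E`-extension `δ ∈ E(X, A)` by conflations `A ⟶ B ⟶ X`, satisfying (ET1)–(ET4)
and their duals.  `IsConf f g δ` means that the sequence `A ⟶ B ⟶ X` given by
`f, g` realizes the extension `δ`. -/
structure ExtCat where
  /-- the biadditive functor `E : Cᵒᵖ × C ⥤ Ab`; `E(X, A) = (E.obj (op X)).obj A` -/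
  E : Cᵒᵖ ⥤ C ⥤ AddCommGrpCat.{v}
  E_additive_right : ∀ X : Cᵒᵖ, (E.obj X).Additive
  E_additive_left : ∀ A : C, (E.flip.obj A).Additive
  /-- `IsConf f g δ`: the sequence `A ⟶ B ⟶ X` realizes `δ ∈ E(X, A)` -/
  IsConf : ∀ {A B X : C}, (A ⟶ B) → (B ⟶ X) → ((E.obj (op X)).obj A) → Prop
  /-- every extension is realized by some conflation -/
  real_exists : ∀ {A X : C} (δ : (E.obj (op X)).obj A),
    ∃ (B : C) (f : A ⟶ B) (g : B ⟶ X), IsConf f g δ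
  /-- any two realizations of the same extension are equivalent -/
  real_unique : ∀ {A B B' X : C} {f : A ⟶ B} {g : B ⟶ X} {f' : A ⟶ B'} {g' : B' ⟶ X}
      {δ : (E.obj (op X)).obj A}, IsConf f g δ → IsConf f' g' δ →
      ∃ b : B ≅ B', f ≫ b.hom = f' ∧ b.hom ≫ g' = g
  /-- the zero extension is realized by the split sequence -/
  real_zero : ∀ A X : C,
    IsConf (biprod.inl : A ⟶ A ⊞ X) (biprod.snd : A ⊞ X ⟶ X) (0 : (E.obj (op X)).obj A)
  /-- realization of morphisms of extensions -/
  real_map : ∀ {A B X A' B' X' : C} {f : A ⟶ B} {g : B ⟶ X} {f' : A' ⟶ B'} {g' : B' ⟶ X'}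
      {δ : (E.obj (op X)).obj A} {δ' : (E.obj (op X')).obj A'}
      (a : A ⟶ A') (c : X ⟶ X'),
      IsConf f g δ → IsConf f' g' δ' →
      (E.obj (op X)).map a δ = (E.map c.op).app A' δ' →
      ∃ b : B ⟶ B', f ≫ b = a ≫ f' ∧ b ≫ g' = g ≫ c
  /-- (ET3) -/
  et3 : ∀ {A B X A' B' X' : C} {f : A ⟶ B} {g : B ⟶ X} {f' : A' ⟶ B'} {g' : B' ⟶ X'}
      {δ : (E.obj (op X)).obj A} {δ' : (E.obj (op X')).obj A'}
      (a : A ⟶ A') (b : B ⟶ B'),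
      IsConf f g δ → IsConf f' g' δ' → f ≫ b = a ≫ f' →
      ∃ c : X ⟶ X', g ≫ c = b ≫ g' ∧
        (E.obj (op X)).map a δ = (E.map c.op).app A' δ'
  /-- (ET3ᵒᵖ) -/
  et3op : ∀ {A B X A' B' X' : C} {f : A ⟶ B} {g : B ⟶ X} {f' : A' ⟶ B'} {g' : B' ⟶ X'}
      {δ : (E.obj (op X)).obj A} {δ' : (E.obj (op X')).obj A'}
      (b : B ⟶ B') (c : X ⟶ X'),
      IsConf f g δ → IsConf f' g' δ' → g ≫ c = b ≫ g' →
      ∃ a : A ⟶ A', f ≫ b = a ≫ f' ∧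
        (E.obj (op X)).map a δ = (E.map c.op).app A' δ'
  /-- (ET4) -/
  et4 : ∀ {A B D F : C} {Cc : C} {f : A ⟶ B} {f' : B ⟶ D} {g : B ⟶ Cc} {g' : Cc ⟶ F}
      {δ : (E.obj (op D)).obj A} {δ' : (E.obj (op F)).obj B},
      IsConf f f' δ → IsConf g g' δ' →
      ∃ (Ee : C) (d : D ⟶ Ee) (e : Ee ⟶ F) (h' : Cc ⟶ Ee)
        (δ'' : (E.obj (op Ee)).obj A),
        IsConf (f ≫ g) h' δ'' ∧
        IsConf d e ((E.obj (op F)).map f' δ') ∧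
        g ≫ h' = f' ≫ d ∧ h' ≫ e = g' ∧
        (E.map d.op).app A δ'' = δ ∧
        (E.obj (op Ee)).map f δ'' = (E.map e.op).app B δ'
  /-- (ET4ᵒᵖ) -/
  et4op : ∀ {D A B F : C} {Cc : C} {f' : D ⟶ A} {f : A ⟶ B} {g' : F ⟶ B} {g : B ⟶ Cc}
      {δ : (E.obj (op B)).obj D} {δ' : (E.obj (op Cc)).obj F},
      IsConf f' f δ → IsConf g' g δ' →
      ∃ (Ee : C) (d : D ⟶ Ee) (e : Ee ⟶ F) (h' : Ee ⟶ A)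
        (δ'' : (E.obj (op Cc)).obj Ee),
        IsConf h' (f ≫ g) δ'' ∧
        IsConf d e ((E.map g'.op).app D δ) ∧
        d ≫ h' = f' ∧ e ≫ g' = h' ≫ f ∧
        (E.obj (op Cc)).map e δ'' = δ' ∧
        (E.obj (op B)).map d δ = (E.map g.op).app Ee δ''

/-- An extriangulated category with enough projectives and enough injectives,
together with chosen syzygies `Ω` and cosyzygies `Susp` (used to define the
higher extension groups `E^{i+1}(X, A) = E(X, Suspᶦ A)`). -/
structure ECat extends ExtCat C where
  /-- chosen projective cover object -/
  P : C → C
  /-- chosen syzygy -/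
  Ω : C → C
  ιP : ∀ X : C, Ω X ⟶ P X
  πP : ∀ X : C, P X ⟶ X
  δP : ∀ X : C, (E.obj (op X)).obj (Ω X)
  confP : ∀ X : C, IsConf (ιP X) (πP X) (δP X)
  P_projective : ∀ (X A : C) (δ : (E.obj (op (P X))).obj A), δ = 0
  /-- chosen injective hull object -/
  I : C → C
  /-- chosen cosyzygy -/
  Susp : C → C
  ιI : ∀ A : C, A ⟶ I A
  πI : ∀ A : C, I A ⟶ Susp A
  δI : ∀ A : C, (E.obj (op (Susp A))).obj A
  confI : ∀ A : C, IsConf (ιI A) (πI A) (δI A)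
  I_injective : ∀ (A X : C) (δ : (E.obj (op X)).obj (I A)), δ = 0

namespace ECat

variable {C} (𝒞 : ECat C)

/-- The group `E(X, A)` of `E`-extensions. -/
def Eext (X A : C) : AddCommGrpCat.{v} := (𝒞.E.obj (op X)).obj A

/-- `Tri A B X` : there is an `E`-triangle `A ⟶ B ⟶ X`. -/
def Tri (A B X : C) : Prop :=
  ∃ (f : A ⟶ B) (g : B ⟶ X) (δ : 𝒞.Eext X A), 𝒞.IsConf f g δ

/-- projective objects: `E(P, A) = 0` for all `A` -/
def Projective (P : C) : Prop := ∀ (A : C) (δ : 𝒞.Eext P A), δ = 0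

/-- injective objects: `E(X, I) = 0` for all `X` -/
def Injective (I : C) : Prop := ∀ (X : C) (δ : 𝒞.Eext X I), δ = 0

/-- `extVanish i X A` says that the higher extension group
`E^{i+1}(X, A) = E(X, Suspᶦ A)` vanishes. -/
def extVanish (i : ℕ) (X A : C) : Prop := ∀ δ : 𝒞.Eext X (𝒞.Susp^[i] A), δ = 0

/-- `S^⊥ = {Y | E^i(T, Y) = 0 for all i ≥ 1, T ∈ S}` -/
def rperp (S : Set C) : Set C := {Y | ∀ T ∈ S, ∀ i : ℕ, 𝒞.extVanish i T Y}

/-- `^⊥S = {Y | E^i(Y, T) = 0 for all i ≥ 1, T ∈ S}` -/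
def lperp (S : Set C) : Set C := {Y | ∀ T ∈ S, ∀ i : ℕ, 𝒞.extVanish i Y T}

/-- `S^{⊥₁} = {Y | E(T, Y) = 0 for all T ∈ S}` -/
def rperp1 (S : Set C) : Set C := {Y | ∀ T ∈ S, ∀ δ : 𝒞.Eext T Y, δ = 0}

/-- `^{⊥₁}S = {Y | E(Y, T) = 0 for all T ∈ S}` -/
def lperp1 (S : Set C) : Set C := {Y | ∀ T ∈ S, ∀ δ : 𝒞.Eext Y T, δ = 0}

/-- self-orthogonal subcategory: `E^i(T₁, T₂) = 0` for all `i ≥ 1`, `T₁, T₂ ∈ S` -/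
def SelfOrth (S : Set C) : Prop := ∀ T₁ ∈ S, ∀ T₂ ∈ S, ∀ i : ℕ, 𝒞.extVanish i T₁ T₂

/-- `Resol S n A' A` : there is an `E`-triangle sequence
`A' → S_n → ⋯ → S_1 → A` with all `S_i ∈ S`. -/
def Resol (S : Set C) : ℕ → C → C → Prop
  | 0, A', A => A' = A
  | n + 1, A', A => ∃ T K, T ∈ S ∧ 𝒞.Tri K T A ∧ Resol S n A' K

/-- `Coresol S n A A'` : there is an `E`-triangle sequence
`A → S_1 → ⋯ → S_n → A'` with all `S_i ∈ S`. -/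
def Coresol (S : Set C) : ℕ → C → C → Prop
  | 0, A, A' => A = A'
  | n + 1, A, A' => ∃ T K, T ∈ S ∧ 𝒞.Tri A T K ∧ Coresol S n K A'

/-- `Pres S n` : objects `A` admitting an `E`-triangle sequence
`A' → S_n → ⋯ → S_1 → A` with all `S_i ∈ S`. -/
def Pres (S : Set C) (n : ℕ) : Set C := {A | ∃ A', Resol 𝒞 S n A' A}

/-- `Copres S n` : objects `A` admitting an `E`-triangle sequence
`A → S_1 → ⋯ → S_n → A'` with all `S_i ∈ S`. -/
def Copres (S : Set C) (n : ℕ) : Set C := {A | ∃ A', Coresol 𝒞 S n A A'}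

/-- `Š_n` : objects admitting a finite `S`-coresolution `A → S_0 → ⋯ → S_n`. -/
def CheckN (S : Set C) : ℕ → Set C
  | 0 => S
  | n + 1 => {A | ∃ T K, T ∈ S ∧ 𝒞.Tri A T K ∧ K ∈ CheckN S n}

/-- `Ŝ_n` : objects admitting a finite `S`-resolution `S_n → ⋯ → S_0 → A`. -/
def HatN (S : Set C) : ℕ → Set C
  | 0 => S
  | n + 1 => {A | ∃ T K, T ∈ S ∧ 𝒞.Tri K T A ∧ K ∈ HatN S n}

/-- `Š = ⋃ₙ Š_n` -/
def Check (S : Set C) : Set C := ⋃ n : ℕ, CheckN 𝒞 S n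

/-- `Ŝ = ⋃ₙ Ŝ_n` -/
def Hat (S : Set C) : Set C := ⋃ n : ℕ, HatN 𝒞 S n

/-- projective dimension at most `n` : there is a projective resolution of length `n` -/
def projDimLE (A : C) (n : ℕ) : Prop := A ∈ HatN 𝒞 {P | 𝒞.Projective P} n

/-- injective dimension at most `n` -/
def injDimLE (A : C) (n : ℕ) : Prop := A ∈ CheckN 𝒞 {I | 𝒞.Injective I} n

/-- `S` is a generator for `Y` : `S ⊆ Y` and every `A ∈ Y` admits an
`E`-triangle `A' → T → A` with `T ∈ S`, `A' ∈ Y`. -/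
def GeneratorFor (S Y : Set C) : Prop :=
  S ⊆ Y ∧ ∀ A ∈ Y, ∃ A' T, T ∈ S ∧ A' ∈ Y ∧ 𝒞.Tri A' T A

/-- `S` is a cogenerator for `Y` : `S ⊆ Y` and every `A ∈ Y` admits an
`E`-triangle `A → T → A'` with `T ∈ S`, `A' ∈ Y`. -/
def CogeneratorFor (S Y : Set C) : Prop :=
  S ⊆ Y ∧ ∀ A ∈ Y, ∃ A' T, T ∈ S ∧ A' ∈ Y ∧ 𝒞.Tri A T A'

/-- `_S X` : objects `A` admitting an `E`-triangle sequence
`⋯ → T₁ → T₀ → A` with all `Tᵢ ∈ S` and all cocones in `S^⊥`. -/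
def genSub (S : Set C) : Set C :=
  {A | ∃ K T : ℕ → C, (∀ n, T n ∈ S) ∧ (∀ n, K n ∈ 𝒞.rperp S) ∧
    𝒞.Tri (K 0) (T 0) A ∧ ∀ n, 𝒞.Tri (K (n + 1)) (T (n + 1)) (K n)}

/-- `X_S` : objects `A` admitting an `E`-triangle sequence
`A → T₀ → T₁ → ⋯` with all `Tᵢ ∈ S` and all cones in `^⊥S`. -/
def cogenSub (S : Set C) : Set C :=
  {A | ∃ K T : ℕ → C, (∀ n, T n ∈ S) ∧ (∀ n, K n ∈ 𝒞.lperp S) ∧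
    𝒞.Tri A (T 0) (K 0) ∧ ∀ n, 𝒞.Tri (K n) (T (n + 1)) (K (n + 1))}

/-- closed under extensions -/
def ClosedExt (S : Set C) : Prop :=
  ∀ A B X : C, 𝒞.Tri A B X → A ∈ S → X ∈ S → B ∈ S

/-- closed under cones of inflations (resp. of deflations) -/
def ClosedCone (S : Set C) : Prop :=
  ∀ A B X : C, 𝒞.Tri A B X → A ∈ S → B ∈ S → X ∈ S

/-- closed under cocones of deflations -/
def ClosedCocone (S : Set C) : Prop :=
  ∀ A B X : C, 𝒞.Tri A B X → B ∈ S → X ∈ S → A ∈ S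

/-- closed under direct summands -/
def ClosedSummands (S : Set C) : Prop :=
  ∀ A B : C, (A ⊞ B) ∈ S → A ∈ S ∧ B ∈ S

/-- closed under isomorphisms -/
def ClosedIso (S : Set C) : Prop := ∀ A B : C, (A ≅ B) → A ∈ S → B ∈ S

/-- coresolving : contains the injectives, closed under extensions and
cones of deflations -/
def Coresolving (S : Set C) : Prop :=
  (∀ I : C, 𝒞.Injective I → I ∈ S) ∧ 𝒞.ClosedExt S ∧ 𝒞.ClosedCone S

/-- resolving : contains the projectives, closed under extensions and
cocones of inflations -/
def Resolving (S : Set C) : Prop :=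
  (∀ P : C, 𝒞.Projective P → P ∈ S) ∧ 𝒞.ClosedExt S ∧ 𝒞.ClosedCocone S

/-- `g : T ⟶ A` is a right `S`-approximation of `A` -/
def IsRightApprox (S : Set C) {T A : C} (g : T ⟶ A) : Prop :=
  T ∈ S ∧ ∀ T' ∈ S, ∀ h : T' ⟶ A, ∃ k : T' ⟶ T, k ≫ g = h

/-- `g : A ⟶ T` is a left `S`-approximation of `A` -/
def IsLeftApprox (S : Set C) {A T : C} (g : A ⟶ T) : Prop :=
  T ∈ S ∧ ∀ T' ∈ S, ∀ h : A ⟶ T', ∃ k : T ⟶ T', g ≫ k = h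

/-- contravariantly finite : every object has a right `S`-approximation -/
def ContravariantlyFinite (S : Set C) : Prop :=
  ∀ A : C, ∃ (T : C) (g : T ⟶ A), IsRightApprox S g

/-- covariantly finite : every object has a left `S`-approximation -/
def CovariantlyFinite (S : Set C) : Prop :=
  ∀ A : C, ∃ (T : C) (g : A ⟶ T), IsLeftApprox S g

/-- tilting subcategory of projective dimension `n` -/
def IsTilting (S : Set C) (n : ℕ) : Prop :=
  ClosedSummands S ∧ (∀ T ∈ S, 𝒞.projDimLE T n) ∧ 𝒞.GeneratorFor S (𝒞.rperp S)

/-- cotilting subcategory of injective dimension `n` -/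
def IsCotilting (S : Set C) (n : ℕ) : Prop :=
  ClosedSummands S ∧ (∀ T ∈ S, 𝒞.injDimLE T n) ∧ 𝒞.CogeneratorFor S (𝒞.lperp S)

end ECat

end ExtTilting

/-!
Let `Ω A ⟶ P A ⟶ A` be the chosen conflation with `P A` projective. Since `C` is Krull–Schmidt
and `𝒳` is covariantly finite and closed under summands, `Ω A` has a left minimal left
`𝒳`-approximation `a : Ω A ⟶ X₀`; push the conflation out along `a` to obtain
`X₀ ⟶ T ⟶ A`. Every `Y ∈ ^{⊥₁}𝒳` has `E(Y, X₀) = 0`, so `T ⟶ A` is a right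
`^{⊥₁}𝒳`-approximation as soon as `T ∈ ^{⊥₁}𝒳`. This is Wakamatsu's lemma: for `ε ∈ E(T, X)`
with `X ∈ 𝒳`, the extension `f^* ε` of `X₀` by `X` has middle term in `𝒳`, so `a` factors
through its deflation; left minimality of `a` makes that deflation split, hence `f^* ε = 0`,
and then `ε` comes from `E(A, X)`, all of whose elements are pushed out from the class of
`Ω A ⟶ P A ⟶ A` along maps factoring through `a`.

Left minimal approximations exist in a Krull–Schmidt category: if `a : K ⟶ ⨁ fᵢ` is a left
approximation and `a ≫ ω = a` with `ω` not invertible, then some matrix entry of `𝟙 - ω` is an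
isomorphism (otherwise `𝟙 - ω` lies in the radical and `ω` is invertible), and this entry
lets one drop a summand from the approximation.
-/

namespace ExtTilting

open ECat

section LocalObjects

variable {C : Type u} [Category.{v} C] [Preadditive C] {X Y Z : C}

lemma isIso_id_sub_of_not_isIso [IsLocalRing (End X)] {x : X ⟶ X} (hx : ¬IsIso x) :
    IsIso (𝟙 X - x) := by
  rcases IsLocalRing.isUnit_or_isUnit_of_add_one (R := End X) (add_sub_cancel x (𝟙 X))
    with hu | hu
  · exact absurd ((isUnit_iff_isIso _).1 hu) hx
  · exact (isUnit_iff_isIso _).1 hu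

lemma isIso_of_comp_eq_id [IsLocalRing (End X)] [IsLocalRing (End Y)] {p : X ⟶ Y} {ρ : Y ⟶ X}
    (h : p ≫ ρ = 𝟙 X) : IsIso p := by
  by_cases hρp : IsIso (ρ ≫ p)
  · exact ⟨ρ, h, (cancel_epi (ρ ≫ p)).1 (by simp [reassoc_of% h])⟩
  · have := isIso_id_sub_of_not_isIso hρp
    have hp : p = 0 := (cancel_mono (𝟙 Y - ρ ≫ p)).1 (by simp [reassoc_of% h])
    exact (one_ne_zero (α := End X) (show 𝟙 X = 0 by rw [← h, hp, zero_comp])).elim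

lemma not_isIso_comp [IsLocalRing (End X)] [IsLocalRing (End Y)] {p : X ⟶ Y} (hp : ¬IsIso p)
    (r : Y ⟶ Z) : ¬IsIso (p ≫ r) := fun _ =>
  hp (isIso_of_comp_eq_id (ρ := r ≫ inv (p ≫ r)) (by rw [← Category.assoc, IsIso.hom_inv_id]))

lemma not_isIso_add [IsLocalRing (End X)] [IsLocalRing (End Y)] {p q : X ⟶ Y} (hp : ¬IsIso p)
    (hq : ¬IsIso q) : ¬IsIso (p + q) := by
  intro _
  have hsum : p ≫ inv (p + q) + q ≫ inv (p + q) = 𝟙 X := by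
    rw [← Preadditive.add_comp, IsIso.hom_inv_id]
  rcases IsLocalRing.isUnit_or_isUnit_of_add_one (R := End X) hsum with hu | hu
  · exact not_isIso_comp hp _ ((isUnit_iff_isIso _).1 hu)
  · exact not_isIso_comp hq _ ((isUnit_iff_isIso _).1 hu)

end LocalObjects

section Biproducts

variable {C : Type u} [Category.{v} C] [Preadditive C]

lemma isIso_ofComponents_of_isIso_schur [HasBinaryBiproducts C] {X₁ X₂ Y₁ Y₂ : C}
    (f₁₁ : X₁ ⟶ Y₁) (f₁₂ : X₁ ⟶ Y₂) (f₂₁ : X₂ ⟶ Y₁) (f₂₂ : X₂ ⟶ Y₂) [IsIso f₁₁]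
    [IsIso (f₂₂ - f₂₁ ≫ inv f₁₁ ≫ f₁₂)] : IsIso (Biprod.ofComponents f₁₁ f₁₂ f₂₁ f₂₂) := by
  let G := Biprod.gaussian' f₁₁ f₁₂ f₂₁ f₂₂
  have : IsIso (G.1.hom ≫ Biprod.ofComponents f₁₁ f₁₂ f₂₁ f₂₂ ≫ G.2.1.hom) := by
    rw [G.2.2.2]
    exact (biprod.mapIso (asIso f₁₁) (asIso (f₂₂ - f₂₁ ≫ inv f₁₁ ≫ f₁₂))).isIso_hom
  have := IsIso.of_isIso_comp_left G.1.hom (Biprod.ofComponents f₁₁ f₁₂ f₂₁ f₂₂ ≫ G.2.1.hom)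
  exact IsIso.of_isIso_comp_right _ G.2.1.hom

lemma isIso_id_sub_of_isIso_schur [HasBinaryBiproducts C] {A R : C} (ζ : A ⊞ R ⟶ A ⊞ R)
    [IsIso (𝟙 A - biprod.inl ≫ ζ ≫ biprod.fst)]
    [IsIso (𝟙 R - (biprod.inr ≫ ζ ≫ biprod.snd + (biprod.inr ≫ ζ ≫ biprod.fst) ≫
      inv (𝟙 A - biprod.inl ≫ ζ ≫ biprod.fst) ≫ biprod.inl ≫ ζ ≫ biprod.snd))] :
    IsIso (𝟙 _ - ζ) := by
  rw [← Biprod.ofComponents_eq (𝟙 _ - ζ)]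
  simp only [Preadditive.sub_comp, Preadditive.comp_sub, Category.id_comp, biprod.inl_fst,
    biprod.inl_snd, biprod.inr_fst, biprod.inr_snd, zero_sub]
  have : IsIso ((𝟙 R - biprod.inr ≫ ζ ≫ biprod.snd) - (-(biprod.inr ≫ ζ ≫ biprod.fst)) ≫
      inv (𝟙 A - biprod.inl ≫ ζ ≫ biprod.fst) ≫ (-(biprod.inl ≫ ζ ≫ biprod.snd))) := by
    convert ‹IsIso (𝟙 R - _)› using 1
    simp only [Preadditive.comp_neg, Preadditive.neg_comp, neg_neg]
    abel
  exact isIso_ofComponents_of_isIso_schur _ _ _ _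

lemma exists_eq_comp_snd_comp_lift_of_comp_eq_zero [HasBinaryBiproducts C] {K A R Y : C}
    {b : K ⟶ A ⊞ R} {φ : A ⊞ R ⟶ Y} (hb : b ≫ φ = 0) [IsIso (biprod.inl ≫ φ)] :
    ∃ r : R ⟶ A, b = b ≫ biprod.snd ≫ biprod.lift r (𝟙 R) := by
  have hsplit : b ≫ biprod.fst ≫ biprod.inl ≫ φ + b ≫ biprod.snd ≫ biprod.inr ≫ φ = 0 := by
    rw [← hb]
    conv_rhs => rw [← Category.id_comp φ, ← biprod.total]
    simp only [Preadditive.add_comp, Preadditive.comp_add, Category.assoc]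
  refine ⟨-(biprod.inr ≫ φ) ≫ inv (biprod.inl ≫ φ), ?_⟩
  ext
  · rw [← cancel_mono (biprod.inl ≫ φ)]
    simp only [Category.assoc, biprod.lift_fst, Preadditive.neg_comp, IsIso.inv_hom_id,
      Category.comp_id, Preadditive.comp_neg]
    exact eq_neg_of_add_eq_zero_left hsplit
  · simp

variable [HasFiniteBiproducts C] [HasBinaryBiproducts C]

@[simps]
noncomputable def biproductIsoBiprod {n : ℕ} (f : Fin (n + 1) → C) (i : Fin (n + 1)) :
    ⨁ f ≅ f i ⊞ ⨁ (fun t => f (i.succAbove t)) where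
  hom := biprod.lift (biproduct.π f i) (biproduct.lift fun t => biproduct.π f (i.succAbove t))
  inv := biprod.desc (biproduct.ι f i) (biproduct.desc fun t => biproduct.ι f (i.succAbove t))
  hom_inv_id := by
    rw [biprod.lift_desc, biproduct.lift_desc, ← biproduct.total,
      Fin.sum_univ_succAbove (fun k => biproduct.π f k ≫ biproduct.ι f k) i]
  inv_hom_id := by
    ext t t' <;> simp [biproduct.ι_π, Fin.succAbove_ne, (Fin.succAbove_ne _ _).symm]

/-- `ζ` lies in the radical. Eliminating the first summand, the Schur complement of `𝟙 - ζ` is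
again of the form `𝟙 - ζ'` with `ζ'` in the radical. -/
lemma isIso_id_sub_of_forall_not_isIso : ∀ {n : ℕ} (f : Fin n → C)
    [∀ i, IsLocalRing (End (f i))] (ζ : ⨁ f ⟶ ⨁ f),
    (∀ i j, ¬IsIso (biproduct.ι f i ≫ ζ ≫ biproduct.π f j)) → IsIso (𝟙 _ - ζ)
  | 0, f, _, ζ, _ => by
    rw [show ζ = 0 from biproduct.hom_ext' _ _ (fun j => j.elim0), sub_zero]
    infer_instance
  | n + 1, f, _, ζ, h => by
    let e := biproductIsoBiprod f 0
    let ζ' := e.inv ≫ ζ ≫ e.hom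
    have : IsIso (𝟙 (f 0) - biprod.inl ≫ ζ' ≫ biprod.fst) :=
      isIso_id_sub_of_not_isIso <| by
        simpa [ζ', e, -Fin.zero_succAbove, -Fin.succAbove_zero] using h 0 0
    have : IsIso (𝟙 _ - (biprod.inr ≫ ζ' ≫ biprod.snd + (biprod.inr ≫ ζ' ≫ biprod.fst) ≫
        inv (𝟙 (f 0) - biprod.inl ≫ ζ' ≫ biprod.fst) ≫ biprod.inl ≫ ζ' ≫ biprod.snd)) := by
      refine isIso_id_sub_of_forall_not_isIso _ _ fun m m' => ?_
      simpa [ζ', e, -Fin.zero_succAbove, -Fin.succAbove_zero] using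
        not_isIso_add (h _ _) (not_isIso_comp (h _ 0) _)
    have : IsIso (𝟙 _ - ζ') := isIso_id_sub_of_isIso_schur ζ'
    rw [show 𝟙 _ - ζ = e.hom ≫ (𝟙 _ - ζ') ≫ e.inv by
      simp only [ζ', Preadditive.comp_sub, Preadditive.sub_comp, Category.id_comp,
        Category.assoc, Iso.hom_inv_id, Iso.hom_inv_id_assoc, Category.comp_id]]
    infer_instance

end Biproducts

section MinimalApproximations

variable {C : Type u} [Category.{v} C]

def IsLeftMinimal {K X : C} (a : K ⟶ X) : Prop :=
  ∀ ω : X ⟶ X, a ≫ ω = a → IsIso ω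

lemma ECat.IsLeftApprox.of_comp_eq {𝒳 : Set C} {K X X' : C} {a : K ⟶ X}
    (ha : IsLeftApprox 𝒳 a) (hX' : X' ∈ 𝒳) {a' : K ⟶ X'} (s : X' ⟶ X) (h : a' ≫ s = a) :
    IsLeftApprox 𝒳 a' :=
  ⟨hX', fun T hT g => let ⟨k, hk⟩ := ha.2 T hT g; ⟨s ≫ k, by rw [← Category.assoc, h, hk]⟩⟩

variable [Preadditive C] [HasFiniteBiproducts C] [HasBinaryBiproducts C] {𝒳 : Set C}

lemma exists_isIso_entry_of_not_isLeftMinimal {K : C} {n : ℕ} (f : Fin n → C)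
    [∀ i, IsLocalRing (End (f i))] {a : K ⟶ ⨁ f} (ha : ¬IsLeftMinimal a) :
    ∃ θ : ⨁ f ⟶ ⨁ f, a ≫ θ = 0 ∧ ∃ i j, IsIso (biproduct.ι f i ≫ θ ≫ biproduct.π f j) := by
  obtain ⟨ω, hω, hnotiso⟩ : ∃ ω, a ≫ ω = a ∧ ¬IsIso ω := by simpa [IsLeftMinimal] using ha
  refine ⟨𝟙 _ - ω, by simp [hω], ?_⟩
  by_contra! h
  exact hnotiso (by simpa using isIso_id_sub_of_forall_not_isIso f _ h)

lemma ECat.IsLeftApprox.comp_biproductIsoBiprod_snd (hiso : ClosedIso 𝒳)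
    (hsum : ClosedSummands 𝒳) {K : C} {n : ℕ} {f : Fin (n + 1) → C} {a : K ⟶ ⨁ f}
    (ha : IsLeftApprox 𝒳 a) {θ : ⨁ f ⟶ ⨁ f} (hθ : a ≫ θ = 0) {i j : Fin (n + 1)}
    (hij : IsIso (biproduct.ι f i ≫ θ ≫ biproduct.π f j)) :
    IsLeftApprox 𝒳 (a ≫ (biproductIsoBiprod f i).hom ≫ biprod.snd) := by
  set e := biproductIsoBiprod f i
  have : IsIso (biprod.inl ≫ e.inv ≫ θ ≫ biproduct.π f j) := by
    simpa [e] using hij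
  obtain ⟨r, hr⟩ := exists_eq_comp_snd_comp_lift_of_comp_eq_zero (b := a ≫ e.hom)
    (φ := e.inv ≫ θ ≫ biproduct.π f j) (by simp [reassoc_of% hθ])
  refine ha.of_comp_eq (hsum _ _ (hiso _ _ e ha.1)).2 (biprod.lift r (𝟙 _) ≫ e.inv) ?_
  calc (a ≫ e.hom ≫ biprod.snd) ≫ biprod.lift r (𝟙 _) ≫ e.inv
      = (a ≫ e.hom ≫ biprod.snd ≫ biprod.lift r (𝟙 _)) ≫ e.inv := by simp only [Category.assoc]
    _ = a := by
      rw [← Category.assoc a e.hom, ← hr, Category.assoc, e.hom_inv_id, Category.comp_id]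

lemma exists_isLeftMinimal_of_isLeftApprox_biproduct (hiso : ClosedIso 𝒳)
    (hsum : ClosedSummands 𝒳) {K : C} : ∀ {n : ℕ} (f : Fin n → C)
    [∀ i, IsLocalRing (End (f i))] (a : K ⟶ ⨁ f), IsLeftApprox 𝒳 a →
    ∃ (X₀ : C) (a₀ : K ⟶ X₀), IsLeftApprox 𝒳 a₀ ∧ IsLeftMinimal a₀
  | n, f, _, a, ha => by
    by_cases hmin : IsLeftMinimal a
    · exact ⟨_, a, ha, hmin⟩
    obtain ⟨θ, hθ, i, j, hij⟩ := exists_isIso_entry_of_not_isLeftMinimal f hmin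
    cases n with
    | zero => exact i.elim0
    | succ m =>
      exact exists_isLeftMinimal_of_isLeftApprox_biproduct hiso hsum _ _
        (ha.comp_biproductIsoBiprod_snd hiso hsum hθ hij)

theorem exists_isLeftApprox_isLeftMinimal (hKS : IsKrullSchmidt C) (hiso : ClosedIso 𝒳)
    (hcov : CovariantlyFinite 𝒳) (hsum : ClosedSummands 𝒳) (K : C) :
    ∃ (X₀ : C) (a : K ⟶ X₀), IsLeftApprox 𝒳 a ∧ IsLeftMinimal a := by
  obtain ⟨Y, g, hg⟩ := hcov K
  obtain ⟨n, f, hf, ⟨φ⟩⟩ := hKS Y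
  exact exists_isLeftMinimal_of_isLeftApprox_biproduct hiso hsum f (g ≫ φ.hom)
    (hg.of_comp_eq (hiso _ _ φ hg.1) φ.inv (by simp))

end MinimalApproximations

namespace ExtCat

variable {C : Type u} [Category.{v} C] [Preadditive C] [HasBinaryBiproducts C] (𝒞 : ExtCat C)

/-! For `δ ∈ E(X, A)`, the pushforward `a_* δ` along `a : A ⟶ A'` is
`(𝒞.E.obj (op X)).map a δ` and the pullback `c^* δ` along `c : X' ⟶ X` is
`(𝒞.E.map c.op).app A δ`. -/

lemma push_id {X A : C} (δ : (𝒞.E.obj (op X)).obj A) : (𝒞.E.obj (op X)).map (𝟙 A) δ = δ := by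
  simp

lemma push_comp {X A A' A'' : C} (a : A ⟶ A') (a' : A' ⟶ A'') (δ : (𝒞.E.obj (op X)).obj A) :
    (𝒞.E.obj (op X)).map (a ≫ a') δ = (𝒞.E.obj (op X)).map a' ((𝒞.E.obj (op X)).map a δ) := by
  simp

lemma pull_id {X A : C} (δ : (𝒞.E.obj (op X)).obj A) : (𝒞.E.map (𝟙 X).op).app A δ = δ := by
  simp

lemma pull_comp {X'' X' X A : C} (c : X'' ⟶ X') (c' : X' ⟶ X) (δ : (𝒞.E.obj (op X)).obj A) :
    (𝒞.E.map (c ≫ c').op).app A δ = (𝒞.E.map c.op).app A ((𝒞.E.map c'.op).app A δ) := by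
  simp

lemma pull_push {X' X A A' : C} (c : X' ⟶ X) (a : A ⟶ A') (δ : (𝒞.E.obj (op X)).obj A) :
    (𝒞.E.map c.op).app A' ((𝒞.E.obj (op X)).map a δ)
      = (𝒞.E.obj (op X')).map a ((𝒞.E.map c.op).app A δ) :=
  ConcreteCategory.congr_hom ((𝒞.E.map c.op).naturality a) δ

lemma eq_zero_of_pull_eq_zero {X Y A : C} {r : Y ⟶ X} (s : X ⟶ Y) (hsr : s ≫ r = 𝟙 X)
    {δ : (𝒞.E.obj (op X)).obj A} (h : (𝒞.E.map r.op).app A δ = 0) : δ = 0 := by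
  rw [← 𝒞.pull_id δ, ← hsr, pull_comp, h, map_zero]

variable {𝒞}

lemma IsConf.exists_lift_of_pull_eq_zero {A B X T : C} {f : A ⟶ B} {g : B ⟶ X}
    {δ : (𝒞.E.obj (op X)).obj A} (hfg : 𝒞.IsConf f g δ) (h : T ⟶ X)
    (hδ : (𝒞.E.map h.op).app A δ = 0) : ∃ k : T ⟶ B, k ≫ g = h := by
  obtain ⟨b, -, hb⟩ := 𝒞.real_map (𝟙 A) h (𝒞.real_zero A T) hfg (by rw [push_id, hδ])
  exact ⟨biprod.inr ≫ b, by rw [Category.assoc, hb, biprod.inr_snd_assoc]⟩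

lemma IsConf.pull_deflation_eq_zero {A B X : C} {f : A ⟶ B} {g : B ⟶ X}
    {δ : (𝒞.E.obj (op X)).obj A} (hfg : 𝒞.IsConf f g δ) : (𝒞.E.map g.op).app A δ = 0 := by
  obtain ⟨c, hc, hδ⟩ := 𝒞.et3 (𝟙 A) (biprod.desc f (𝟙 B)) (𝒞.real_zero A B) hfg
    (by rw [biprod.inl_desc, Category.id_comp])
  have hcg : c = g := by simpa using congrArg (biprod.inr ≫ ·) hc
  rw [← hcg, ← hδ, map_zero]

/-- By (ET4)ᵒᵖ, `d_* ε = g^* δ''` for an inflation `d` whose class is `f^* ε = 0`; so `d` splits,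
and a retraction of `d` carries `δ''` to a preimage of `ε`. -/
lemma IsConf.exists_eq_pull_of_pull_eq_zero {A B X W : C} {f : A ⟶ B} {g : B ⟶ X}
    {δ : (𝒞.E.obj (op X)).obj A} (hfg : 𝒞.IsConf f g δ) (ε : (𝒞.E.obj (op B)).obj W)
    (hε : (𝒞.E.map f.op).app W ε = 0) :
    ∃ ρ : (𝒞.E.obj (op X)).obj W, ε = (𝒞.E.map g.op).app W ρ := by
  obtain ⟨M, t, e, hε'⟩ := 𝒞.real_exists ε
  obtain ⟨Ee, d, e', h', δ'', -, hd, -, -, -, hdδ⟩ := 𝒞.et4op hε' hfg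
  rw [hε] at hd
  obtain ⟨b, hb, -⟩ := 𝒞.real_unique hd (𝒞.real_zero W A)
  refine ⟨(𝒞.E.obj (op X)).map (b.hom ≫ biprod.fst) δ'', ?_⟩
  rw [pull_push, ← hdδ, ← push_comp, ← Category.assoc, hb, biprod.inl_fst, push_id]

lemma IsConf.exists_push_eq_of_projective {K P A W : C} {i : K ⟶ P} {p : P ⟶ A}
    {δ : (𝒞.E.obj (op A)).obj K} (hδ : 𝒞.IsConf i p δ)
    (hP : ∀ (Y : C) (η : (𝒞.E.obj (op P)).obj Y), η = 0) (ρ : (𝒞.E.obj (op A)).obj W) :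
    ∃ q : K ⟶ W, (𝒞.E.obj (op A)).map q δ = ρ := by
  obtain ⟨N, u, v, hρ⟩ := 𝒞.real_exists ρ
  obtain ⟨l, hl⟩ := hρ.exists_lift_of_pull_eq_zero p (hP W _)
  obtain ⟨q, -, hq⟩ := 𝒞.et3op l (𝟙 A) hδ hρ (by rw [Category.comp_id, hl])
  exact ⟨q, by rw [hq, pull_id]⟩

end ExtCat

namespace ECat

variable {C : Type u} [Category.{v} C] [Preadditive C] [HasBinaryBiproducts C] {𝒞 : ECat C}

/-- Wakamatsu's lemma. -/
theorem mem_lperp1_of_isLeftMinimal {𝒳 : Set C} (hext : 𝒞.ClosedExt 𝒳) {K P A X₀ T : C}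
    {i : K ⟶ P} {p : P ⟶ A} {δ : (𝒞.E.obj (op A)).obj K} (hδ : 𝒞.IsConf i p δ)
    (hP : ∀ (Y : C) (η : (𝒞.E.obj (op P)).obj Y), η = 0) {a : K ⟶ X₀} (ha : IsLeftApprox 𝒳 a)
    (hmin : IsLeftMinimal a)
    {f : X₀ ⟶ T} {g : T ⟶ A} (hfg : 𝒞.IsConf f g ((𝒞.E.obj (op A)).map a δ)) :
    T ∈ 𝒞.lperp1 𝒳 := by
  intro W hW (ε : (𝒞.E.obj (op T)).obj W)
  show ε = 0
  have hfε : (𝒞.E.map f.op).app W ε = 0 := by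
    obtain ⟨E', d, e, hde⟩ := 𝒞.real_exists ((𝒞.E.map f.op).app W ε)
    obtain ⟨b, hb, -⟩ := 𝒞.real_map a (𝟙 A) hδ hfg (ExtCat.pull_id _ _).symm
    obtain ⟨w, hw⟩ := hde.exists_lift_of_pull_eq_zero a <| by
      rw [← ExtCat.pull_comp, ← hb, ExtCat.pull_comp, hP W ((𝒞.E.map b.op).app W ε), map_zero]
    obtain ⟨s, hs⟩ := ha.2 E' (hext _ _ _ ⟨d, e, _, hde⟩ hW ha.1) w
    have : IsIso (s ≫ e) := hmin _ (by rw [← Category.assoc, hs, hw])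
    exact 𝒞.eq_zero_of_pull_eq_zero (inv (s ≫ e) ≫ s) (by simp) hde.pull_deflation_eq_zero
  obtain ⟨ρ, rfl⟩ := hfg.exists_eq_pull_of_pull_eq_zero ε hfε
  obtain ⟨q, rfl⟩ := hδ.exists_push_eq_of_projective hP ρ
  obtain ⟨k, rfl⟩ := ha.2 W hW q
  rw [ExtCat.push_comp, ExtCat.pull_push, hfg.pull_deflation_eq_zero, map_zero]

theorem lperp1_contravariantlyFinite [HasFiniteBiproducts C] (hKS : IsKrullSchmidt C)
    {𝒳 : Set C} (hiso : ClosedIso 𝒳) (hcov : CovariantlyFinite 𝒳) (hext : 𝒞.ClosedExt 𝒳)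
    (hsum : ClosedSummands 𝒳) : ContravariantlyFinite (𝒞.lperp1 𝒳) := by
  intro A
  obtain ⟨X₀, a, ha, hmin⟩ := exists_isLeftApprox_isLeftMinimal hKS hiso hcov hsum (𝒞.Ω A)
  obtain ⟨T, f, g, hfg⟩ := 𝒞.real_exists ((𝒞.E.obj (op A)).map a (𝒞.δP A))
  exact ⟨T, g, mem_lperp1_of_isLeftMinimal hext (𝒞.confP A) (𝒞.P_projective A) ha hmin hfg,
    fun T' hT' h => hfg.exists_lift_of_pull_eq_zero h (hT' X₀ ha.1 _)⟩

theorem lperp1_closedExt (𝒳 : Set C) : 𝒞.ClosedExt (𝒞.lperp1 𝒳) := by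
  rintro A B X ⟨f, g, δ, hfg⟩ hA hX W hW (ε : (𝒞.E.obj (op B)).obj W)
  show ε = 0
  obtain ⟨ρ, rfl⟩ := hfg.exists_eq_pull_of_pull_eq_zero ε (hA W hW _)
  rw [show ρ = 0 from hX W hW ρ, map_zero]

theorem lperp1_closedSummands (𝒳 : Set C) : ClosedSummands (𝒞.lperp1 𝒳) := fun _ _ hAB =>
  ⟨fun W hW _ => 𝒞.eq_zero_of_pull_eq_zero biprod.inl biprod.inl_fst (hAB W hW _),
    fun W hW _ => 𝒞.eq_zero_of_pull_eq_zero biprod.inr biprod.inr_snd (hAB W hW _)⟩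

end ECat

variable {C : Type u} [Category.{v} C] [Preadditive C]
  [HasFiniteBiproducts C] [HasBinaryBiproducts C]

theorem stmt1 (hKS : IsKrullSchmidt C) (𝒞 : ECat C) (𝒳 : Set C)
    (hiso : ClosedIso 𝒳) (hcov : CovariantlyFinite 𝒳)
    (hext : 𝒞.ClosedExt 𝒳) (hsum : ClosedSummands 𝒳) :
    ContravariantlyFinite (𝒞.lperp1 𝒳) ∧ 𝒞.ClosedExt (𝒞.lperp1 𝒳) ∧
      ClosedSummands (𝒞.lperp1 𝒳) :=
  ⟨𝒞.lperp1_contravariantlyFinite hKS hiso hcov hext hsum, 𝒞.lperp1_closedExt 𝒳,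
    𝒞.lperp1_closedSummands 𝒳⟩

end ExtTilting
end

section
/- Let T be a self-orthogonal subcategory of an extriangulated category C with enough projectives and injectives. Then E^i(X₁, X₂) = 0 for all i ≥ 1, all X₁ ∈ Ť (the subcategory of objects admitting a finite T-coresolution), and all X₂ ∈ T^⊥. -/
open CategoryTheory Opposite Limits

universe v u

/-! Dimension shifting along the coresolution `X → T → K` with `T ∈ 𝒯` and `K` one step shorter.
A class `ε ∈ E(X, Z)` is the pullback of the injective-hull conflation `Z → I Z → Σ Z` along some
`c : X ⟶ Σ Z`. As `E(K, Σ Z) = 0`, `c` factors through `X ⟶ T`, so `ε` is pulled back from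
`E(T, Z) = 0`. -/

namespace ExtTilting

variable {C : Type u} [Category.{v} C] [Preadditive C] [HasBinaryBiproducts C]

namespace ExtCat

variable (𝒜 : ExtCat C)

lemma exists_comp_eq_of_map_eq_zero {X T K W : C} {f : X ⟶ T} {g : T ⟶ K}
    {δ : (𝒜.E.obj (op K)).obj X} (hδ : 𝒜.IsConf f g δ) (c : X ⟶ W)
    (hc : (𝒜.E.obj (op K)).map c δ = 0) : ∃ c' : T ⟶ W, f ≫ c' = c := by
  obtain ⟨b, hb, -⟩ := 𝒜.real_map c (𝟙 K) hδ (𝒜.real_zero W K) (by simp [hc])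
  exact ⟨b ≫ biprod.fst, by rw [← Category.assoc, hb]; simp⟩

lemma exists_eq_map_of_isConf {X Z I S : C} {ι : Z ⟶ I} {π : I ⟶ S}
    {η : (𝒜.E.obj (op S)).obj Z} (hη : 𝒜.IsConf ι π η)
    (hI : ∀ δ : (𝒜.E.obj (op X)).obj I, δ = 0) (ε : (𝒜.E.obj (op X)).obj Z) :
    ∃ c : X ⟶ S, ε = (𝒜.E.map c.op).app Z η := by
  obtain ⟨B, a, b, hε⟩ := 𝒜.real_exists ε
  obtain ⟨m, hm⟩ := 𝒜.exists_comp_eq_of_map_eq_zero hε ι (hI _)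
  obtain ⟨c, -, hc⟩ := 𝒜.et3 (𝟙 Z) m hε hη (by simp [hm])
  exact ⟨c, by simpa using hc⟩

end ExtCat

namespace ECat

variable (𝒞 : ECat C)

lemma eq_zero_of_tri {X T K Z : C} (htri : 𝒞.Tri X T K)
    (hT : ∀ δ : 𝒞.Eext T Z, δ = 0) (hK : ∀ δ : 𝒞.Eext K (𝒞.Susp Z), δ = 0)
    (ε : 𝒞.Eext X Z) : ε = 0 := by
  obtain ⟨f, g, δ, hδ⟩ := htri
  obtain ⟨c, rfl⟩ := 𝒞.exists_eq_map_of_isConf (𝒞.confI Z) (𝒞.I_injective Z X) ε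
  obtain ⟨c', rfl⟩ := 𝒞.exists_comp_eq_of_map_eq_zero hδ c (hK _)
  have hc' : (𝒞.E.map c'.op).app Z (𝒞.δI Z) = 0 := hT _
  simp [hc']
  rfl

lemma extVanish_succ_iff {i : ℕ} {X Y : C} :
    𝒞.extVanish (i + 1) X Y ↔ ∀ δ : 𝒞.Eext X (𝒞.Susp (𝒞.Susp^[i] Y)), δ = 0 := by
  rw [extVanish, Function.iterate_succ_apply']

lemma extVanish_of_tri {X T K Y : C} (htri : 𝒞.Tri X T K) {i : ℕ}
    (hT : 𝒞.extVanish i T Y) (hK : 𝒞.extVanish (i + 1) K Y) : 𝒞.extVanish i X Y :=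
  𝒞.eq_zero_of_tri htri hT (𝒞.extVanish_succ_iff.mp hK)

lemma extVanish_of_mem_checkN {S : Set C} {Y : C} (hY : Y ∈ 𝒞.rperp S) :
    ∀ n, ∀ X ∈ 𝒞.CheckN S n, ∀ i, 𝒞.extVanish i X Y
  | 0, X, hX, i => hY X hX i
  | n + 1, _, ⟨T, K, hT, htri, hK⟩, i =>
    𝒞.extVanish_of_tri htri (hY T hT i) (extVanish_of_mem_checkN hY n K hK (i + 1))

end ECat

end ExtTilting

namespace ExtTilting
open ECat
variable {C : Type u} [Category.{v} C] [Preadditive C]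
  [HasFiniteBiproducts C] [HasBinaryBiproducts C]

theorem stmt3_general (𝒞 : ECat C) (𝒯 : Set C) :
    ∀ X₁ ∈ 𝒞.Check 𝒯, ∀ X₂ ∈ 𝒞.rperp 𝒯, ∀ i : ℕ, 𝒞.extVanish i X₁ X₂ := by
  intro X₁ hX₁ X₂ hX₂ i
  obtain ⟨n, hn⟩ := Set.mem_iUnion.mp hX₁
  exact 𝒞.extVanish_of_mem_checkN hX₂ n X₁ hn i

theorem stmt3 (𝒞 : ECat C) (𝒯 : Set C) (hso : 𝒞.SelfOrth 𝒯) :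
    ∀ X₁ ∈ 𝒞.Check 𝒯, ∀ X₂ ∈ 𝒞.rperp 𝒯, ∀ i : ℕ, 𝒞.extVanish i X₁ X₂ :=
  stmt3_general 𝒞 𝒯

end ExtTilting
end

section
/- Let T be a subcategory of an extriangulated category C with enough projectives and injectives. Then pd(T) ≤ n if and only if T^⊥ is closed under n-images, i.e. Pres^n(T^⊥) = T^⊥. -/
open CategoryTheory Opposite Limits

universe v u

/-!
Both directions are dimension shifting: `E^{i+1}(T, Y) = E(T, Σⁱ Y)` vanishes iff `E(Ωⁱ T, Y)`
does. If `pd T ≤ n`, walking down an `E`-triangle sequence `A' → S_n → ⋯ → S_1 → A` with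
`S_k ∈ T^⊥` shows that `E(Ωⁱ T, A)` vanishes because `E(Ω^{i+n} T, A')` does; and split
conflations `A → A ⊞ A → A` put `T^⊥` inside `Pres^n(T^⊥)`. Conversely, the injective
coresolution `Y → I_0 → ⋯ → Σⁿ Y` puts `Σⁿ Y` in `Pres^n(T^⊥) = T^⊥` for every `Y`, so
`E(Ωⁿ T, Y) = 0` and `Ωⁿ T` is projective.
-/

namespace ExtTilting

variable {C : Type u} [Category.{v} C] [Preadditive C] [HasBinaryBiproducts C]

namespace ExtCat

variable {𝒞 : ExtCat C}

def ExtZero (𝒞 : ExtCat C) (X A : C) : Prop := ∀ δ : (𝒞.E.obj (op X)).obj A, δ = 0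

def pushExt {X A B : C} (a : A ⟶ B) (δ : (𝒞.E.obj (op X)).obj A) :
    (𝒞.E.obj (op X)).obj B :=
  (𝒞.E.obj (op X)).map a δ

def pullExt {X Y A : C} (c : Y ⟶ X) (δ : (𝒞.E.obj (op X)).obj A) :
    (𝒞.E.obj (op Y)).obj A :=
  (𝒞.E.map c.op).app A δ

@[simp]
lemma pushExt_id {X A : C} (δ : (𝒞.E.obj (op X)).obj A) : pushExt (𝟙 A) δ = δ := by
  simp [pushExt]

lemma pushExt_comp {X A B D : C} (a : A ⟶ B) (b : B ⟶ D) (δ : (𝒞.E.obj (op X)).obj A) :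
    pushExt (a ≫ b) δ = pushExt b (pushExt a δ) := by
  simp [pushExt]

@[simp]
lemma pushExt_zero {X A B : C} (a : A ⟶ B) : pushExt a (0 : (𝒞.E.obj (op X)).obj A) = 0 :=
  map_zero _

lemma pushExt_add {X A B : C} (a a' : A ⟶ B) (δ : (𝒞.E.obj (op X)).obj A) :
    pushExt (a + a') δ = pushExt a δ + pushExt a' δ := by
  have := 𝒞.E_additive_right (op X)
  simp [pushExt, Functor.map_add]

@[simp]
lemma pullExt_id {X A : C} (δ : (𝒞.E.obj (op X)).obj A) : pullExt (𝟙 X) δ = δ := by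
  simp [pullExt]

lemma pullExt_comp {X Y Z A : C} (c : Z ⟶ Y) (c' : Y ⟶ X) (δ : (𝒞.E.obj (op X)).obj A) :
    pullExt (c ≫ c') δ = pullExt c (pullExt c' δ) := by
  simp [pullExt]

@[simp]
lemma pullExt_zero {X Y A : C} (c : Y ⟶ X) : pullExt c (0 : (𝒞.E.obj (op X)).obj A) = 0 :=
  map_zero _

lemma extZero_biprod {X A B : C} (hA : 𝒞.ExtZero X A) (hB : 𝒞.ExtZero X B) :
    𝒞.ExtZero X (A ⊞ B) := fun δ => by
  rw [← pushExt_id δ, ← biprod.total, pushExt_add, pushExt_comp, pushExt_comp,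
    hA (pushExt biprod.fst δ), hB (pushExt biprod.snd δ), pushExt_zero, pushExt_zero, add_zero]

namespace IsConf

variable {A B X W : C} {f : A ⟶ B} {g : B ⟶ X} {δ : (𝒞.E.obj (op X)).obj A}

/-- The realization of the morphism of extensions `(a, 𝟙) : δ ⟶ 0` into the split
conflation provides the factorization. -/
lemma exists_inflation_comp (conf : 𝒞.IsConf f g δ) (a : A ⟶ W) (ha : pushExt a δ = 0) :
    ∃ k : B ⟶ W, f ≫ k = a := by
  obtain ⟨b, hb, -⟩ := 𝒞.real_map a (𝟙 X) conf (𝒞.real_zero W X) (by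
    change pushExt a δ = pullExt (𝟙 X) 0
    rw [ha, pullExt_zero])
  exact ⟨b ≫ biprod.fst, by rw [← Category.assoc, hb, Category.assoc, biprod.inl_fst,
    Category.comp_id]⟩

lemma exists_comp_deflation (conf : 𝒞.IsConf f g δ) (c : W ⟶ X) (hc : pullExt c δ = 0) :
    ∃ k : W ⟶ B, k ≫ g = c := by
  obtain ⟨b, -, hb⟩ := 𝒞.real_map (𝟙 A) c (𝒞.real_zero A W) conf (by
    change pushExt (𝟙 A) 0 = pullExt c δ
    rw [hc, pushExt_zero])
  exact ⟨biprod.inr ≫ b, by rw [Category.assoc, hb, ← Category.assoc, biprod.inr_snd,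
    Category.id_comp]⟩

/-- Exactness of `𝒞(W, X) → E(W, A) → E(W, B)`. -/
lemma exists_pullExt_eq (conf : 𝒞.IsConf f g δ) (α : (𝒞.E.obj (op W)).obj A)
    (hα : pushExt f α = 0) : ∃ c : W ⟶ X, pullExt c δ = α := by
  obtain ⟨B', f', g', confα⟩ := 𝒞.real_exists α
  obtain ⟨k, hk⟩ := confα.exists_inflation_comp f hα
  obtain ⟨c, -, hc⟩ := 𝒞.et3 (𝟙 A) k confα conf (by rw [hk, Category.id_comp])
  change pushExt (𝟙 A) α = pullExt c δ at hc
  exact ⟨c, by rw [← hc, pushExt_id]⟩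

/-- Exactness of `𝒞(A, W) → E(X, W) → E(B, W)`. -/
lemma exists_pushExt_eq (conf : 𝒞.IsConf f g δ) (α : (𝒞.E.obj (op X)).obj W)
    (hα : pullExt g α = 0) : ∃ a : A ⟶ W, pushExt a δ = α := by
  obtain ⟨B', f', g', confα⟩ := 𝒞.real_exists α
  obtain ⟨k, hk⟩ := confα.exists_comp_deflation g hα
  obtain ⟨a, -, ha⟩ := 𝒞.et3op k (𝟙 X) conf confα (by rw [Category.comp_id, hk])
  change pushExt a δ = pullExt (𝟙 X) α at ha
  exact ⟨a, by rw [ha, pullExt_id]⟩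

end IsConf

end ExtCat

namespace ECat

open ExtCat

variable {𝒞 : ECat C}

/-- Compare the projective presentation `D → P → X` with the injective hull `W → I W → Σ W`. -/
lemma extZero_susp_iff {D P X : C} {u : D ⟶ P} {p : P ⟶ X} {θ : (𝒞.E.obj (op X)).obj D}
    (conf : 𝒞.IsConf u p θ) (hP : ∀ A, 𝒞.ExtZero P A) (W : C) :
    𝒞.ExtZero X (𝒞.Susp W) ↔ 𝒞.ExtZero D W := by
  constructor
  · intro hX β
    obtain ⟨s, rfl⟩ := (𝒞.confI W).exists_pullExt_eq β (𝒞.I_injective W D _)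
    obtain ⟨k, rfl⟩ := conf.exists_inflation_comp s (hX _)
    rw [pullExt_comp, hP W (pullExt k _), pullExt_zero]
  · intro hD γ
    obtain ⟨a, rfl⟩ := conf.exists_pushExt_eq γ (hP _ _)
    obtain ⟨k, rfl⟩ := (𝒞.confI W).exists_comp_deflation a (hD _)
    rw [pushExt_comp, 𝒞.I_injective W X (pushExt k θ), pushExt_zero]

lemma extVanish_iff_extZero_syzygy (i : ℕ) (T Y : C) :
    𝒞.extVanish i T Y ↔ 𝒞.ExtZero (𝒞.Ω^[i] T) Y := by
  induction i generalizing Y with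
  | zero => exact Iff.rfl
  | succ i ih =>
    rw [Function.iterate_succ_apply']
    exact (ih (𝒞.Susp Y)).trans (extZero_susp_iff (𝒞.confP _) (𝒞.P_projective _) Y)

lemma extZero_of_isConf {T A B Cc : C} {f : A ⟶ B} {g : B ⟶ Cc} {δ : (𝒞.E.obj (op Cc)).obj A}
    (conf : 𝒞.IsConf f g δ) (hB : 𝒞.ExtZero T B) (hA : 𝒞.ExtZero (𝒞.Ω T) A) :
    𝒞.ExtZero T Cc := by
  intro α
  obtain ⟨a, rfl⟩ := (𝒞.confP T).exists_pushExt_eq α (𝒞.P_projective T Cc _)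
  obtain ⟨k, rfl⟩ := conf.exists_comp_deflation a (hA _)
  rw [pushExt_comp, hB (pushExt k _), pushExt_zero]

lemma extVanish_of_projDimLE {n : ℕ} {T : C} (hT : 𝒞.projDimLE T n) {m : ℕ} (hm : n ≤ m)
    (Y : C) : 𝒞.extVanish m T Y := by
  induction n generalizing T m with
  | zero => exact hT _
  | succ n ih =>
    obtain ⟨P, K, hP, ⟨u, p, θ, conf⟩, hK⟩ := hT
    obtain ⟨m, rfl⟩ : ∃ m', m = m' + 1 := ⟨m - 1, by omega⟩
    show 𝒞.ExtZero T (𝒞.Susp^[m + 1] Y)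
    rw [Function.iterate_succ_apply']
    exact (extZero_susp_iff conf hP _).2 (ih hK (by omega))

lemma extZero_syzygy_of_resol {𝒮 : Set C} {T : C} (hS : ∀ S ∈ 𝒮, ∀ i, 𝒞.extVanish i T S)
    {m : ℕ} {A' A : C} (hres : 𝒞.Resol 𝒮 m A' A) {i : ℕ}
    (hA' : 𝒞.ExtZero (𝒞.Ω^[i + m] T) A') : 𝒞.ExtZero (𝒞.Ω^[i] T) A := by
  induction m generalizing A i with
  | zero => exact hres ▸ hA'
  | succ m ih =>
    obtain ⟨S, K, hS', ⟨u, p, θ, conf⟩, hres⟩ := hres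
    refine extZero_of_isConf conf ((extVanish_iff_extZero_syzygy i T S).1 (hS S hS' i)) ?_
    rw [← Function.iterate_succ_apply' 𝒞.Ω]
    exact ih hres (by rwa [show i + 1 + m = i + (m + 1) by omega])

lemma pres_rperp_subset_rperp {𝒯 : Set C} {n : ℕ} (h : ∀ T ∈ 𝒯, 𝒞.projDimLE T n) :
    𝒞.Pres (𝒞.rperp 𝒯) n ⊆ 𝒞.rperp 𝒯 := by
  rintro A ⟨A', hres⟩ T hT i
  rw [extVanish_iff_extZero_syzygy]
  refine extZero_syzygy_of_resol (fun S hS => ?_) hres ?_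
  · exact hS T hT
  · rw [← extVanish_iff_extZero_syzygy]
    exact extVanish_of_projDimLE (h T hT) (Nat.le_add_left n i) A'

lemma biprod_mem_rperp {𝒯 : Set C} {A B : C} (hA : A ∈ 𝒞.rperp 𝒯) (hB : B ∈ 𝒞.rperp 𝒯) :
    (A ⊞ B) ∈ 𝒞.rperp 𝒯 := fun T hT i =>
  (extVanish_iff_extZero_syzygy i T _).2 <| extZero_biprod
    ((extVanish_iff_extZero_syzygy i T A).1 (hA T hT i))
    ((extVanish_iff_extZero_syzygy i T B).1 (hB T hT i))

lemma resol_self {S : Set C} (hS : ∀ A ∈ S, (A ⊞ A) ∈ S) {A : C} (hA : A ∈ S) :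
    ∀ n, 𝒞.Resol S n A A
  | 0 => rfl
  | n + 1 => ⟨A ⊞ A, A, hS A hA, ⟨_, _, _, 𝒞.real_zero A A⟩, resol_self hS hA n⟩

lemma Injective.mem_rperp {W : C} (hW : 𝒞.Injective W) (𝒯 : Set C) : W ∈ 𝒞.rperp 𝒯 :=
  fun T _ i => (extVanish_iff_extZero_syzygy i T W).2 (hW _)

lemma resol_susp_iterate {S : Set C} (hS : ∀ A, 𝒞.I A ∈ S) (Y : C) :
    ∀ m, 𝒞.Resol S m Y (𝒞.Susp^[m] Y)
  | 0 => rfl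
  | m + 1 => by
    rw [Function.iterate_succ_apply']
    exact ⟨_, _, hS _, ⟨_, _, _, 𝒞.confI _⟩, resol_susp_iterate hS Y m⟩

lemma projDimLE_of_projective_syzygy {X : C} :
    ∀ m, 𝒞.Projective (𝒞.Ω^[m] X) → 𝒞.projDimLE X m
  | 0, h => h
  | m + 1, h => ⟨_, _, 𝒞.P_projective X, ⟨_, _, _, 𝒞.confP X⟩,
      projDimLE_of_projective_syzygy m h⟩

end ECat

end ExtTilting

namespace ExtTilting
open ECat
variable {C : Type u} [Category.{v} C] [Preadditive C]
  [HasFiniteBiproducts C] [HasBinaryBiproducts C]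

theorem stmt9 (𝒞 : ECat C) (𝒯 : Set C) (n : ℕ) :
    (∀ T ∈ 𝒯, 𝒞.projDimLE T n) ↔ 𝒞.Pres (𝒞.rperp 𝒯) n = 𝒞.rperp 𝒯 := by
  constructor
  · intro h
    exact (pres_rperp_subset_rperp h).antisymm fun A hA =>
      ⟨A, resol_self (fun B hB => biprod_mem_rperp hB hB) hA n⟩
  · intro h T hT
    refine projDimLE_of_projective_syzygy n fun Y => ?_
    have hY : 𝒞.Susp^[n] Y ∈ 𝒞.rperp 𝒯 :=
      h ▸ ⟨Y, resol_susp_iterate (fun A => Injective.mem_rperp (𝒞.I_injective A) 𝒯) Y n⟩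
    exact (extVanish_iff_extZero_syzygy n T Y).1 (hY T hT 0)

end ExtTilting
end

section
/- Let X be a coresolving subcategory of an extriangulated category C with enough projectives and injectives. Then ^{⊥₁}X = ^⊥X, i.e. an object Y satisfies E(Y,X)=0 for all X ∈ X if and only if E^i(Y,X)=0 for all i ≥ 1 and all X ∈ X. -/
open CategoryTheory Opposite Limits

universe v u

/-! Since `E^{i+1}(Y, T)` is `E(Y, Σⁱ T)`, it suffices that `𝒳` is closed under the
cosyzygy `Σ`, and a coresolving `𝒳` is: `Σ T` is the cone of the inflation of `T` into the
injective `I T`. -/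

namespace ExtTilting.ECat

variable {C : Type u} [Category.{v} C] [Preadditive C] [HasBinaryBiproducts C] (𝒞 : ECat C)

theorem injective_I (A : C) : 𝒞.Injective (𝒞.I A) :=
  𝒞.I_injective A

theorem tri_I_Susp (A : C) : 𝒞.Tri A (𝒞.I A) (𝒞.Susp A) :=
  ⟨_, _, _, 𝒞.confI A⟩

theorem lperp_subset_lperp1 (S : Set C) : 𝒞.lperp S ⊆ 𝒞.lperp1 S :=
  fun _ hY T hT => hY T hT 0

theorem lperp1_subset_lperp {S : Set C} (hS : Set.MapsTo 𝒞.Susp S S) :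
    𝒞.lperp1 S ⊆ 𝒞.lperp S :=
  fun _ hY _ hT i => hY _ (hS.iterate i hT)

variable {𝒞}

theorem Coresolving.mapsTo_Susp {𝒳 : Set C} (h : 𝒞.Coresolving 𝒳) :
    Set.MapsTo 𝒞.Susp 𝒳 𝒳 :=
  fun A hA => h.2.2 _ _ _ (𝒞.tri_I_Susp A) hA (h.1 _ (𝒞.injective_I A))

end ExtTilting.ECat

namespace ExtTilting
open ECat
variable {C : Type u} [Category.{v} C] [Preadditive C]
  [HasFiniteBiproducts C] [HasBinaryBiproducts C]

theorem stmt13 (𝒞 : ECat C) (𝒳 : Set C) (hcor : 𝒞.Coresolving 𝒳) :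
    𝒞.lperp1 𝒳 = 𝒞.lperp 𝒳 :=
  (𝒞.lperp1_subset_lperp hcor.mapsTo_Susp).antisymm (𝒞.lperp_subset_lperp1 𝒳)

end ExtTilting
end

section
/- Let A be a Krull-Schmidt abelian category with enough projectives and injectives, and let (X, Z, Y) be a complete hereditary cotorsion triple in A. Then the exact category E = (A, F_X), whose conflations are the short exact sequences that are Hom(X,−)-exact, has enough projectives and enough injectives; moreover its projective objects are exactly X and its injective objects are exactly Y. -/
set_option linter.unusedSectionVars false
set_option linter.unusedVariables false

open CategoryTheory Limits

universe v u

namespace CotorsionTriple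

variable (A : Type u) [Category.{v} A] [Abelian A] [HasFiniteBiproducts A]

/-- A Krull-Schmidt category: every object is a finite biproduct of objects
with local endomorphism rings. -/
def IsKrullSchmidt : Prop :=
  ∀ X : A, ∃ (n : ℕ) (f : Fin n → A),
    (∀ i, IsLocalRing (End (f i))) ∧ Nonempty (X ≅ ⨁ f)

variable {A}

/-- `Ext¹(X, Y) = 0`, expressed via splitting of all short exact sequences
`0 → Y → B → X → 0`. -/
def Ext1Zero (X Y : A) : Prop :=
  ∀ (B : A) (f : Y ⟶ B) (g : B ⟶ X) (w : f ≫ g = 0),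
    (ShortComplex.mk f g w).ShortExact → ∃ r : B ⟶ Y, f ≫ r = 𝟙 Y

/-- `(𝒳, 𝒴)` is a cotorsion pair: `𝒳 = ^{⊥₁}𝒴` and `𝒴 = 𝒳^{⊥₁}`. -/
def IsCotorsionPair (𝒳 𝒴 : Set A) : Prop :=
  (∀ W : A, W ∈ 𝒳 ↔ ∀ Z ∈ 𝒴, Ext1Zero W Z) ∧
  (∀ Z : A, Z ∈ 𝒴 ↔ ∀ W ∈ 𝒳, Ext1Zero W Z)

/-- completeness of a cotorsion pair `(𝒳, 𝒴)` -/
def IsCompletePair (𝒳 𝒴 : Set A) : Prop :=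
  (∀ M : A, ∃ (Z W : A) (f : Z ⟶ W) (g : W ⟶ M) (w : f ≫ g = 0),
    W ∈ 𝒳 ∧ Z ∈ 𝒴 ∧ (ShortComplex.mk f g w).ShortExact) ∧
  (∀ M : A, ∃ (Z' W' : A) (f : M ⟶ Z') (g : Z' ⟶ W') (w : f ≫ g = 0),
    W' ∈ 𝒳 ∧ Z' ∈ 𝒴 ∧ (ShortComplex.mk f g w).ShortExact)

/-- a resolving subcategory of `A` : contains the projectives, closed under
extensions and under kernels of epimorphisms -/
def IsResolving (𝒳 : Set A) : Prop :=
  (∀ P : A, Projective P → P ∈ 𝒳) ∧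
  (∀ S : ShortComplex A, S.ShortExact → S.X₁ ∈ 𝒳 → S.X₃ ∈ 𝒳 → S.X₂ ∈ 𝒳) ∧
  (∀ S : ShortComplex A, S.ShortExact → S.X₂ ∈ 𝒳 → S.X₃ ∈ 𝒳 → S.X₁ ∈ 𝒳)

/-- the conflations of the exact structure `F_𝒳` : short exact sequences of `A`
which remain exact after applying `Hom(X, -)` for every `X ∈ 𝒳` -/
def FConf (𝒳 : Set A) (S : ShortComplex A) : Prop :=
  S.ShortExact ∧ ∀ W ∈ 𝒳, ∀ h : W ⟶ S.X₃, ∃ k : W ⟶ S.X₂, k ≫ S.g = h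

/-- projective objects of the exact category `(A, F_𝒳)` -/
def FProjective (𝒳 : Set A) (P : A) : Prop :=
  ∀ S : ShortComplex A, FConf 𝒳 S → ∀ h : P ⟶ S.X₃, ∃ k : P ⟶ S.X₂, k ≫ S.g = h

/-- injective objects of the exact category `(A, F_𝒳)` -/
def FInjective (𝒳 : Set A) (I : A) : Prop :=
  ∀ S : ShortComplex A, FConf 𝒳 S → ∀ h : S.X₁ ⟶ I, ∃ k : S.X₂ ⟶ I, S.f ≫ k = h



section Aux

variable {𝒳 𝒵 𝒴 : Set A}

lemma shortExact_of_epi {B C : A} (g : B ⟶ C) [Epi g] :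
    (ShortComplex.mk (kernel.ι g) g (kernel.condition g)).ShortExact := by
  refine ShortComplex.ShortExact.mk' ?_ inferInstance inferInstance
  exact (ShortComplex.mk (kernel.ι g) g (kernel.condition g)).exact_of_f_is_kernel
    (kernelIsKernel g)

lemma shortExact_of_mono {Z B : A} (f : Z ⟶ B) [Mono f] :
    (ShortComplex.mk f (cokernel.π f) (cokernel.condition f)).ShortExact := by
  refine ShortComplex.ShortExact.mk' ?_ inferInstance inferInstance
  exact (ShortComplex.mk f (cokernel.π f) (cokernel.condition f)).exact_of_g_is_cokernel
    (cokernelIsCokernel f)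

lemma retraction_of_section {S : ShortComplex A} (hS : S.ShortExact)
    (s : S.X₃ ⟶ S.X₂) (hs : s ≫ S.g = 𝟙 S.X₃) :
    ∃ r : S.X₂ ⟶ S.X₁, S.f ≫ r = 𝟙 S.X₁ :=
  ⟨(ShortComplex.Splitting.ofExactOfSection S hS.exact s hs hS.mono_f).r,
   (ShortComplex.Splitting.ofExactOfSection S hS.exact s hs hS.mono_f).f_r⟩

lemma ext1Zero_of_injective {E : A} [Injective E] (W : A) : Ext1Zero W E := by
  intro B f g w hS
  haveI := hS.mono_f
  exact ⟨Injective.factorThru (𝟙 E) f, Injective.comp_factorThru _ _⟩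

lemma lift_of_ext1Zero {K B C W : A} (f : K ⟶ B) (g : B ⟶ C) (w : f ≫ g = 0)
    (hS : (ShortComplex.mk f g w).ShortExact) (he : Ext1Zero W K) (h : W ⟶ C) :
    ∃ l : W ⟶ B, l ≫ g = h := by
  haveI : Mono (ShortComplex.mk f g w).f := hS.mono_f
  haveI : Epi (ShortComplex.mk f g w).g := hS.epi_g
  haveI : Epi g := hS.epi_g
  set z : K ⟶ pullback g h := pullback.lift f 0 (by simp [w]) with hzdef
  have hz1 : z ≫ pullback.fst g h = f := pullback.lift_fst _ _ _
  have hz2 : z ≫ pullback.snd g h = 0 := pullback.lift_snd _ _ _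
  haveI : Mono z := by
    have : Mono (z ≫ pullback.fst g h) := by rw [hz1]; infer_instance
    exact mono_of_mono z (pullback.fst g h)
  have hker : IsLimit (KernelFork.ofι z hz2) := by
    refine KernelFork.IsLimit.ofι _ _
      (fun {T} τ hτ => (KernelFork.IsLimit.lift' hS.exact.fIsKernel (τ ≫ pullback.fst g h)
        (by rw [Category.assoc, pullback.condition, ← Category.assoc, hτ, zero_comp])).1)
      (fun {T} τ hτ => ?_) (fun {T} τ hτ m hm => ?_)
    · apply pullback.hom_ext
      · rw [Category.assoc, hz1]
        exact (KernelFork.IsLimit.lift' hS.exact.fIsKernel _ _).2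
      · rw [Category.assoc, hz2, comp_zero, hτ]
    · rw [← cancel_mono z, hm]
      apply pullback.hom_ext
      · rw [Category.assoc, hz1]
        exact ((KernelFork.IsLimit.lift' hS.exact.fIsKernel _ _).2).symm
      · rw [Category.assoc, hz2, comp_zero, hτ]
  have hSE' : (ShortComplex.mk z (pullback.snd g h) hz2).ShortExact := by
    refine ShortComplex.ShortExact.mk' ?_ inferInstance inferInstance
    exact (ShortComplex.mk z (pullback.snd g h) hz2).exact_of_f_is_kernel hker
  obtain ⟨r, hr⟩ := he _ z (pullback.snd g h) hz2 hSE'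
  have spl := ShortComplex.Splitting.ofExactOfRetraction
    (ShortComplex.mk z (pullback.snd g h) hz2) hSE'.exact r hr hSE'.epi_g
  refine ⟨spl.s ≫ pullback.fst g h, ?_⟩
  rw [Category.assoc, pullback.condition, ← Category.assoc]
  have hsg : spl.s ≫ pullback.snd g h = 𝟙 _ := spl.s_g
  rw [hsg, Category.id_comp]

lemma extend_of_ext1Zero {Z B C I : A} (f : Z ⟶ B) (g : B ⟶ C) (w : f ≫ g = 0)
    (hS : (ShortComplex.mk f g w).ShortExact) (he : Ext1Zero C I) (u : Z ⟶ I) :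
    ∃ k : B ⟶ I, f ≫ k = u := by
  haveI : Mono (ShortComplex.mk f g w).f := hS.mono_f
  haveI : Epi (ShortComplex.mk f g w).g := hS.epi_g
  haveI : Mono f := hS.mono_f
  set q : pushout f u ⟶ C := pushout.desc g 0 (by simp [w]) with hqdef
  have hq1 : pushout.inl f u ≫ q = g := pushout.inl_desc _ _ _
  have hq2 : pushout.inr f u ≫ q = 0 := pushout.inr_desc _ _ _
  haveI : Mono (pushout.inr f u) := inferInstance
  haveI : Epi q := by
    have : Epi (pushout.inl f u ≫ q) := by rw [hq1]; infer_instance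
    exact epi_of_epi (pushout.inl f u) q
  have hcoker : IsColimit (CokernelCofork.ofπ q hq2) := by
    refine CokernelCofork.IsColimit.ofπ _ _
      (fun {T} τ hτ => (CokernelCofork.IsColimit.desc' hS.exact.gIsCokernel
        (pushout.inl f u ≫ τ)
        (by rw [← Category.assoc, pushout.condition, Category.assoc, hτ, comp_zero])).1)
      (fun {T} τ hτ => ?_) (fun {T} τ hτ m hm => ?_)
    · apply pushout.hom_ext
      · rw [← Category.assoc, hq1]
        exact (CokernelCofork.IsColimit.desc' hS.exact.gIsCokernel _ _).2
      · rw [← Category.assoc, hq2, zero_comp, hτ]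
    · rw [← cancel_epi q, hm]
      apply pushout.hom_ext
      · rw [← Category.assoc, hq1]
        exact ((CokernelCofork.IsColimit.desc' hS.exact.gIsCokernel _ _).2).symm
      · rw [← Category.assoc, hq2, zero_comp, hτ]
  have hSE' : (ShortComplex.mk (pushout.inr f u) q hq2).ShortExact := by
    refine ShortComplex.ShortExact.mk' ?_ inferInstance inferInstance
    exact (ShortComplex.mk (pushout.inr f u) q hq2).exact_of_g_is_cokernel hcoker
  obtain ⟨r, hr⟩ := he _ (pushout.inr f u) q hq2 hSE'
  refine ⟨pushout.inl f u ≫ r, ?_⟩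
  rw [← Category.assoc, pushout.condition, Category.assoc, hr, Category.comp_id]

lemma keyLift [EnoughProjectives A] (hp1 : IsCotorsionPair 𝒳 𝒵) (hh2 : IsResolving 𝒵)
    {X Z₀ B : A} (hX : X ∈ 𝒳) (hZ : Z₀ ∈ 𝒵) (e : B ⟶ Z₀) [Epi e] (h : X ⟶ Z₀) :
    ∃ l : X ⟶ B, l ≫ e = h := by
  have hSE := shortExact_of_epi (Projective.π Z₀)
  have hΩ : kernel (Projective.π Z₀) ∈ 𝒵 :=
    hh2.2.2 _ hSE (hh2.1 _ inferInstance) hZ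
  obtain ⟨l₀, hl₀⟩ := lift_of_ext1Zero _ _ _ hSE ((hp1.1 X).mp hX _ hΩ) h
  refine ⟨l₀ ≫ Projective.factorThru (Projective.π Z₀) e, ?_⟩
  rw [Category.assoc, Projective.factorThru_comp, hl₀]

lemma cokerClosed [EnoughProjectives A] (hp1 : IsCotorsionPair 𝒳 𝒵) (hh1 : IsResolving 𝒳)
    {Z₁ Z₂ D : A} (m : Z₁ ⟶ Z₂) (d : Z₂ ⟶ D) (wmd : m ≫ d = 0)
    (hmd : (ShortComplex.mk m d wmd).ShortExact) (h1 : Z₁ ∈ 𝒵) (h2 : Z₂ ∈ 𝒵) : D ∈ 𝒵 := by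
  refine (hp1.2 D).mpr (fun X₀ hX₀ => ?_)
  intro B f g w hS
  haveI : Mono (ShortComplex.mk f g w).f := hS.mono_f
  haveI : Epi (ShortComplex.mk f g w).g := hS.epi_g
  haveI : Epi g := hS.epi_g
  have hTP := shortExact_of_epi (Projective.π X₀)
  have hΩ : kernel (Projective.π X₀) ∈ 𝒳 := hh1.2.2 _ hTP (hh1.1 _ inferInstance) hX₀
  set P := Projective.over X₀ with hP
  set π : P ⟶ X₀ := Projective.π X₀ with hπ
  set ι : kernel π ⟶ P := kernel.ι π with hι
  set t : P ⟶ B := Projective.factorThru π g with htdef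
  have ht : t ≫ g = π := Projective.factorThru_comp _ _
  have hv0 : (ι ≫ t) ≫ g = 0 := by rw [Category.assoc, ht, kernel.condition]
  obtain ⟨v, hv⟩ := KernelFork.IsLimit.lift' hS.exact.fIsKernel (ι ≫ t) hv0
  obtain ⟨v2, hv2⟩ := lift_of_ext1Zero m d wmd hmd ((hp1.1 _).mp hΩ _ h1) v
  obtain ⟨ψ, hψ⟩ := extend_of_ext1Zero ι π (kernel.condition π) hTP
    ((hp1.1 _).mp hX₀ _ h2) v2
  have hfac : ι ≫ (t - (ψ ≫ d) ≫ f) = 0 := by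
    have : ι ≫ (ψ ≫ d) ≫ f = ι ≫ t := by
      simp only [← Category.assoc]
      rw [hψ, hv2]
      exact hv
    rw [Preadditive.comp_sub, this, sub_self]
  obtain ⟨σ, hσ⟩ := CokernelCofork.IsColimit.desc' hTP.exact.gIsCokernel _ hfac
  have hσg : σ ≫ g = 𝟙 X₀ := by
    haveI : Epi π := inferInstance
    rw [← cancel_epi π, ← Category.assoc]
    have hσ' : π ≫ σ = t - (ψ ≫ d) ≫ f := hσ
    rw [hσ', Preadditive.sub_comp, ht, Category.assoc, w, comp_zero, sub_zero,
      Category.comp_id]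
  exact retraction_of_section hS σ hσg

lemma keyExt [EnoughProjectives A] [EnoughInjectives A]
    (hp1 : IsCotorsionPair 𝒳 𝒵) (hp2 : IsCotorsionPair 𝒵 𝒴) (hh1 : IsResolving 𝒳)
    {Z I B : A} (hZ : Z ∈ 𝒵) (hI : I ∈ 𝒴) (m : Z ⟶ B) [Mono m] (u : Z ⟶ I) :
    ∃ φ : B ⟶ I, m ≫ φ = u := by
  set e : Z ⟶ Injective.under Z := Injective.ι Z with hedef
  have hTE := shortExact_of_mono e
  have hE : Injective.under Z ∈ 𝒵 :=
    (hp1.2 _).mpr fun W _ => ext1Zero_of_injective W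
  have hD : cokernel e ∈ 𝒵 :=
    cokerClosed hp1 hh1 e (cokernel.π e) (cokernel.condition e) hTE hZ hE
  obtain ⟨u2, hu2⟩ := extend_of_ext1Zero e (cokernel.π e) (cokernel.condition e) hTE
    ((hp2.2 I).mp hI _ hD) u
  refine ⟨Injective.factorThru e m ≫ u2, ?_⟩
  rw [← Category.assoc, Injective.comp_factorThru, hu2]

lemma finjective_of_mem [EnoughProjectives A] [EnoughInjectives A]
    (hp1 : IsCotorsionPair 𝒳 𝒵) (hp2 : IsCotorsionPair 𝒵 𝒴)
    (hc1 : IsCompletePair 𝒳 𝒵) (hh1 : IsResolving 𝒳)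
    {I : A} (hI : I ∈ 𝒴) : FInjective 𝒳 I := by
  intro S hS h
  haveI : Mono S.f := hS.1.mono_f
  haveI : Epi S.g := hS.1.epi_g
  obtain ⟨Z, X, i, p, wT, hX, hZ, hT⟩ := hc1.1 S.X₃
  haveI : Mono (ShortComplex.mk i p wT).f := hT.mono_f
  haveI : Epi (ShortComplex.mk i p wT).g := hT.epi_g
  haveI : Mono i := hT.mono_f
  haveI : Epi p := hT.epi_g
  obtain ⟨t, ht⟩ := hS.2 X hX p
  have h0 : (i ≫ t) ≫ S.g = 0 := by rw [Category.assoc, ht]; exact wT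
  obtain ⟨α, hα⟩ := KernelFork.IsLimit.lift' hS.1.exact.fIsKernel (i ≫ t) h0
  have hα' : α ≫ S.f = i ≫ t := hα
  obtain ⟨χ, hχ⟩ := keyExt hp1 hp2 hh1 hZ hI i (α ≫ h)
  set e : (S.X₁ ⊞ X) ⟶ S.X₂ := biprod.desc S.f t with hedef
  set z : Z ⟶ S.X₁ ⊞ X := biprod.lift (-α) i with hzdef
  have hze : z ≫ e = 0 := by
    rw [hzdef, hedef, biprod.lift_desc, Preadditive.neg_comp, hα', neg_add_cancel]
  haveI : Mono z := by
    have hzsnd : z ≫ biprod.snd = i := biprod.lift_snd _ _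
    have : Mono (z ≫ biprod.snd) := by rw [hzsnd]; infer_instance
    exact mono_of_mono z biprod.snd
  haveI : Epi e := by
    refine Preadditive.epi_of_cancel_zero e (fun {R} u hu => ?_)
    have hfu : S.f ≫ u = 0 := by
      rw [← biprod.inl_desc S.f t, ← hedef, Category.assoc, hu, comp_zero]
    obtain ⟨v, hv⟩ := CokernelCofork.IsColimit.desc' hS.1.exact.gIsCokernel u hfu
    have hv' : S.g ≫ v = u := hv
    have htu : t ≫ u = 0 := by
      rw [← biprod.inr_desc S.f t, ← hedef, Category.assoc, hu, comp_zero]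
    have : p ≫ v = 0 := by rw [← ht, Category.assoc, hv', htu]
    have hv0 : v = 0 := by rw [← cancel_epi p, this, comp_zero]
    rw [← hv', hv0, comp_zero]
  have hker : IsLimit (KernelFork.ofι z hze) := by
    have key : ∀ {T : A} (τ : T ⟶ S.X₁ ⊞ X), τ ≫ e = 0 →
        ((τ ≫ biprod.snd) ≫ p = 0 ∧
          ∀ (ω : T ⟶ Z), ω ≫ i = τ ≫ biprod.snd → ω ≫ z = τ) := by
      intro T τ hτ
      have hτsum : (τ ≫ biprod.fst) ≫ S.f + (τ ≫ biprod.snd) ≫ t = 0 := by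
        have : biprod.lift (τ ≫ biprod.fst) (τ ≫ biprod.snd) = τ := by
          apply biprod.hom_ext <;> simp
        rw [← biprod.lift_desc, this, ← hedef, hτ]
      constructor
      · have : (τ ≫ biprod.snd) ≫ p = (τ ≫ biprod.snd) ≫ t ≫ S.g := by rw [ht]
        rw [this, ← Category.assoc]
        have : (τ ≫ biprod.snd) ≫ t = -((τ ≫ biprod.fst) ≫ S.f) := by
          rw [← neg_eq_of_add_eq_zero_right hτsum]
        rw [this, Preadditive.neg_comp, Category.assoc, S.zero, comp_zero, neg_zero]
      · intro ω hω
        apply biprod.hom_ext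
        · have c2 : (ω ≫ z) ≫ biprod.fst = -(ω ≫ α) := by
            rw [Category.assoc, hzdef, biprod.lift_fst, Preadditive.comp_neg]
          rw [c2, ← cancel_mono S.f, Preadditive.neg_comp, Category.assoc, hα',
            ← Category.assoc, hω]
          exact (eq_neg_of_add_eq_zero_left hτsum).symm
        · rw [Category.assoc, hzdef, biprod.lift_snd, hω]
    refine KernelFork.IsLimit.ofι _ _
      (fun {T} τ hτ => (KernelFork.IsLimit.lift' hT.exact.fIsKernel (τ ≫ biprod.snd)
        (key τ hτ).1).1)
      (fun {T} τ hτ => ?_) (fun {T} τ hτ m' hm' => ?_)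
    · exact (key τ hτ).2 _ (KernelFork.IsLimit.lift' hT.exact.fIsKernel _ _).2
    · rw [← cancel_mono z, hm']
      exact ((key τ hτ).2 _ (KernelFork.IsLimit.lift' hT.exact.fIsKernel _ _).2).symm
  have hSE' : (ShortComplex.mk z e hze).ShortExact := by
    refine ShortComplex.ShortExact.mk' ?_ inferInstance inferInstance
    exact (ShortComplex.mk z e hze).exact_of_f_is_kernel hker
  set w' : (S.X₁ ⊞ X) ⟶ I := biprod.desc h χ with hwdef
  have hzw : z ≫ w' = 0 := by
    rw [hzdef, hwdef, biprod.lift_desc, Preadditive.neg_comp, hχ, neg_add_cancel]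
  obtain ⟨k, hk⟩ := CokernelCofork.IsColimit.desc' hSE'.exact.gIsCokernel w' hzw
  have hk' : e ≫ k = w' := hk
  refine ⟨k, ?_⟩
  rw [← biprod.inl_desc S.f t, ← hedef, Category.assoc, hk', hwdef, biprod.inl_desc]

end Aux

theorem stmt18 [EnoughProjectives A] [EnoughInjectives A]
    (hKS : IsKrullSchmidt A) (𝒳 𝒵 𝒴 : Set A)
    (hp1 : IsCotorsionPair 𝒳 𝒵) (hp2 : IsCotorsionPair 𝒵 𝒴)
    (hc1 : IsCompletePair 𝒳 𝒵) (hc2 : IsCompletePair 𝒵 𝒴)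
    (hh1 : IsResolving 𝒳) (hh2 : IsResolving 𝒵) :
    (∀ M : A, ∃ (K P : A) (f : K ⟶ P) (g : P ⟶ M) (w : f ≫ g = 0),
      FConf 𝒳 (ShortComplex.mk f g w) ∧ FProjective 𝒳 P) ∧
    (∀ M : A, ∃ (I K : A) (f : M ⟶ I) (g : I ⟶ K) (w : f ≫ g = 0),
      FConf 𝒳 (ShortComplex.mk f g w) ∧ FInjective 𝒳 I) ∧
    (∀ P : A, FProjective 𝒳 P ↔ P ∈ 𝒳) ∧
    (∀ I : A, FInjective 𝒳 I ↔ I ∈ 𝒴) := by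
  classical
  have precover : ∀ M : A, ∃ (Z X : A) (f : Z ⟶ X) (g : X ⟶ M) (w : f ≫ g = 0),
      X ∈ 𝒳 ∧ FConf 𝒳 (ShortComplex.mk f g w) := by
    intro M
    obtain ⟨Z, X, f, g, w, hX, hZ, hSE⟩ := hc1.1 M
    exact ⟨Z, X, f, g, w, hX, hSE,
      fun W hW h => lift_of_ext1Zero f g w hSE ((hp1.1 W).mp hW Z hZ) h⟩
  have env : ∀ M : A, ∃ (Y₀ Z₀ : A) (a : M ⟶ Y₀) (b : Y₀ ⟶ Z₀) (w : a ≫ b = 0),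
      Y₀ ∈ 𝒴 ∧ FConf 𝒳 (ShortComplex.mk a b w) := by
    intro M
    obtain ⟨Y₀, Z₀, a, b, w, hZ₀, hY₀, hSE⟩ := hc2.2 M
    haveI : Epi (ShortComplex.mk a b w).g := hSE.epi_g
    haveI : Epi b := hSE.epi_g
    exact ⟨Y₀, Z₀, a, b, w, hY₀, hSE,
      fun X hX h => keyLift hp1 hh2 hX hZ₀ b h⟩
  have memXtoFP : ∀ P : A, P ∈ 𝒳 → FProjective 𝒳 P := fun P hP S hS h => hS.2 P hP h
  have memYtoFI : ∀ I : A, I ∈ 𝒴 → FInjective 𝒳 I :=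
    fun I hI => finjective_of_mem hp1 hp2 hc1 hh1 hI
  refine ⟨?_, ?_, ?_, ?_⟩
  · intro M
    obtain ⟨Z, X, f, g, w, hX, hconf⟩ := precover M
    exact ⟨Z, X, f, g, w, hconf, memXtoFP X hX⟩
  · intro M
    obtain ⟨Y₀, Z₀, a, b, w, hY₀, hconf⟩ := env M
    exact ⟨Y₀, Z₀, a, b, w, hconf, memYtoFI Y₀ hY₀⟩
  · intro P
    refine ⟨fun hFP => ?_, memXtoFP P⟩
    refine (hp1.1 P).mpr (fun Z hZ B f g w hSE => ?_)
    have hconf : FConf 𝒳 (ShortComplex.mk f g w) :=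
      ⟨hSE, fun W hW h => lift_of_ext1Zero f g w hSE ((hp1.1 W).mp hW Z hZ) h⟩
    obtain ⟨k, hk⟩ := hFP _ hconf (𝟙 P)
    exact retraction_of_section hSE k hk
  · intro I
    refine ⟨fun hFI => ?_, memYtoFI I⟩
    obtain ⟨Y₀, Z₀, a, b, w, hY₀, hconf⟩ := env I
    obtain ⟨k, hk⟩ := hFI _ hconf (𝟙 I)
    refine (hp2.2 I).mpr (fun W hW B f g w2 hSE => ?_)
    obtain ⟨ψ, hψ⟩ := extend_of_ext1Zero f g w2 hSE ((hp2.2 Y₀).mp hY₀ W hW) a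
    exact ⟨ψ ≫ k, by rw [← Category.assoc, hψ, hk]⟩

end CotorsionTriple
end
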